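/- arXiv:2308.01225 — 5 statements merged into one kernel-verified Lean document; each statement's English description precedes it below -/
import Mathlib

section
/- Let (α, β, γ) : (M₁, H₁, Δ₁) × N → (M₂, H₂, Δ₂) be a sesquiquadratic map of odd form groups, let X ≤ Δ₁ be a subgroup generated by elements u_i ∸ v_i (i ∈ I) with π(u_i) = π(v_i) and ρ(u_i) = ρ(v_i) such that (M₁, H₁, Δ₁/X) is a well-defined odd form group, and let Y ≤ N be the subgroup generated by elements n_j − n′_j (j ∈ J). Suppose that: γ(u_i, n) = γ(v_i, n) for all n in a fixed generating set of the abelian group N; γ(u, n_j) = γ(u, n′_j) for all u in a fixed set of elements generating the odd form parameter Δ₁ (i.e. whose images generate Δ₁/φ(H₁)); and (α, β) factors through (M₁, H₁) × (N/Y). Then (α, β, γ) factors through a sesquiquadratic map (M₁, H₁, Δ₁/X) × (N/Y) → (M₂, H₂, Δ₂). -/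
/-- A hermitian group `(M, H)`: abelian groups with an involution on `H` and a
biadditive pairing `M × M → H` compatible with the involution. -/
structure HermitianGroup (M H : Type) [AddCommGroup M] [AddCommGroup H] where
  bar : H → H
  bar_add : ∀ h h', bar (h + h') = bar h + bar h'
  bar_bar : ∀ h, bar (bar h) = h
  pair : M → M → H
  pair_add_left : ∀ m m' n, pair (m + m') n = pair m n + pair m' n
  pair_add_right : ∀ m n n', pair m (n + n') = pair m n + pair m n'
  bar_pair : ∀ m m', bar (pair m m') = pair m' m

/-- An odd form group `(M, H, Δ)` over a hermitian group `(M, H)`. -/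
structure OddFormGroupStr {M H : Type} [AddCommGroup M] [AddCommGroup H]
    (hg : HermitianGroup M H) (Δ : Type) [AddGroup Δ] where
  φ : H → Δ
  π : Δ → M
  ρ : Δ → H
  φ_plus_bar : ∀ h, φ (h + hg.bar h) = 0
  φ_add : ∀ h h', φ (h + h') = φ h + φ h'
  φ_pair : ∀ m, φ (hg.pair m m) = 0
  π_φ : ∀ h, π (φ h) = 0
  ρ_φ : ∀ h, ρ (φ h) = h - hg.bar h
  π_add : ∀ u v, π (u + v) = π u + π v
  ρ_add : ∀ u v, ρ (u + v) = ρ u - hg.pair (π u) (π v) + ρ v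
  add_comm' : ∀ u v, u + v = v + u - φ (hg.pair (π u) (π v))
  ρ_bar : ∀ u, ρ u + hg.pair (π u) (π u) + hg.bar (ρ u) = 0

/-- A sesquiquadratic map of hermitian groups `(M₁,H₁) × N → (M₂,H₂)`. -/
structure SqHermStr {M₁ H₁ M₂ H₂ : Type} [AddCommGroup M₁] [AddCommGroup H₁]
    [AddCommGroup M₂] [AddCommGroup H₂]
    (hg₁ : HermitianGroup M₁ H₁) (hg₂ : HermitianGroup M₂ H₂)
    (N : Type) [AddCommGroup N] where
  α : M₁ → N → M₂
  β : N → H₁ → N → H₂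
  α_add_left : ∀ m m' n, α (m + m') n = α m n + α m' n
  α_add_right : ∀ m n n', α m (n + n') = α m n + α m n'
  β_add₁ : ∀ n n' h n'', β (n + n') h n'' = β n h n'' + β n' h n''
  β_add₂ : ∀ n h h' n', β n (h + h') n' = β n h n' + β n h' n'
  β_add₃ : ∀ n h n' n'', β n h (n' + n'') = β n h n' + β n h n''
  bar_β : ∀ n h n', hg₂.bar (β n h n') = β n' (hg₁.bar h) n
  pair_α : ∀ m n m' n', hg₂.pair (α m n) (α m' n') = β n (hg₁.pair m m') n'

/-- A sesquiquadratic map of odd form groups `(M₁,H₁,Δ₁) × N → (M₂,H₂,Δ₂)`. -/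
structure SqOFG {M₁ H₁ M₂ H₂ : Type} [AddCommGroup M₁] [AddCommGroup H₁]
    [AddCommGroup M₂] [AddCommGroup H₂]
    {hg₁ : HermitianGroup M₁ H₁} {hg₂ : HermitianGroup M₂ H₂}
    {Δ₁ Δ₂ : Type} [AddGroup Δ₁] [AddGroup Δ₂]
    (ofg₁ : OddFormGroupStr hg₁ Δ₁) (ofg₂ : OddFormGroupStr hg₂ Δ₂)
    (N : Type) [AddCommGroup N] extends SqHermStr hg₁ hg₂ N where
  γ : Δ₁ → N → Δ₂
  π_γ : ∀ u n, ofg₂.π (γ u n) = α (ofg₁.π u) n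
  γ_φ : ∀ h n, γ (ofg₁.φ h) n = ofg₂.φ (β n h n)
  γ_add : ∀ u u' n, γ (u + u') n = γ u n + γ u' n
  ρ_γ : ∀ u n, ofg₂.ρ (γ u n) = β n (ofg₁.ρ u) n
  γ_add_right : ∀ u n n', γ u (n + n') = γ u n + ofg₂.φ (β n' (ofg₁.ρ u) n) + γ u n'

/-- `x` has the expression `φ h ∔ ∑ kᵢ·uᵢ` (sum taken along the list `l`). -/
def FreeOFGExpr {M H : Type} [AddCommGroup M] [AddCommGroup H]
    {hg : HermitianGroup M H} {Δ : Type} [AddGroup Δ]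
    (ofg : OddFormGroupStr hg Δ) {I : Type} (u : I → Δ)
    (x : Δ) (h : H) (k : I → ℤ) (l : List I) : Prop :=
  l.Nodup ∧ (∀ i, i ∉ l → k i = 0) ∧
    x = ofg.φ h + (l.map fun i => k i • u i).sum

/-! The map `γ` descends to `(Δ₁ ⧸ X) × (N ⧸ Y)` as soon as it kills `X` in the first variable
and is `Y`-periodic in the second. By the rule for `γ(u, n + n')`, `γ(x, ·)` is periodic in
`n'ⱼ - n''ⱼ` once `γ(x, n'ⱼ) = γ(x, n''ⱼ)`; this holds for all `x` because both sides are additive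
in `x` and agree on `T` and, via `β`, on `φ(H₁)`. Since `ρ(uᵢ) = ρ(vᵢ)`, the same rule makes the
set of `n` with `γ(uᵢ, n) = γ(vᵢ, n)` a subgroup, hence all of `N`, so `γ(uᵢ - vᵢ, ·) = 0` and
`γ` kills `X`. -/

theorem Function.periodic_of_mem_addSubgroup_closure {N α : Type} [AddGroup N] {f : N → α}
    {S : Set N} (hS : ∀ y ∈ S, Function.Periodic f y) {y : N}
    (hy : y ∈ AddSubgroup.closure S) : Function.Periodic f y := by
  induction hy using AddSubgroup.closure_induction with
  | mem y hy => exact hS y hy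
  | zero => exact fun n => by rw [add_zero]
  | add a b _ _ ha hb => exact ha.add_period hb
  | neg a _ ha => exact ha.neg

namespace OddFormGroupStr

variable {M H Δ : Type} [AddCommGroup M] [AddCommGroup H] [AddGroup Δ] {hg : HermitianGroup M H}
  (ofg : OddFormGroupStr hg Δ)

def φHom : H →+ Δ := AddMonoidHom.mk' ofg.φ ofg.φ_add

theorem φ_zero : ofg.φ 0 = 0 := ofg.φHom.map_zero

end OddFormGroupStr

theorem SqHermStr.β_zero_left {M₁ H₁ M₂ H₂ N : Type} [AddCommGroup M₁] [AddCommGroup H₁]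
    [AddCommGroup M₂] [AddCommGroup H₂] [AddCommGroup N]
    {hg₁ : HermitianGroup M₁ H₁} {hg₂ : HermitianGroup M₂ H₂} (sq : SqHermStr hg₁ hg₂ N)
    (h : H₁) (n : N) : sq.β 0 h n = 0 :=
  (AddMonoidHom.mk' (sq.β · h n) fun a b => sq.β_add₁ a b h n).map_zero

namespace SqOFG

variable {M₁ H₁ M₂ H₂ Δ₁ Δ₂ N : Type} [AddCommGroup M₁] [AddCommGroup H₁] [AddCommGroup M₂]
  [AddCommGroup H₂] [AddGroup Δ₁] [AddGroup Δ₂] [AddCommGroup N]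
  {hg₁ : HermitianGroup M₁ H₁} {hg₂ : HermitianGroup M₂ H₂}
  {ofg₁ : OddFormGroupStr hg₁ Δ₁} {ofg₂ : OddFormGroupStr hg₂ Δ₂} (sq : SqOFG ofg₁ ofg₂ N)

def γHom (n : N) : Δ₁ →+ Δ₂ := AddMonoidHom.mk' (sq.γ · n) (sq.γ_add · · n)

theorem γ_zero_right (x : Δ₁) : sq.γ x 0 = 0 := by
  have h := sq.γ_add_right x 0 0
  rwa [add_zero, sq.β_zero_left, ofg₂.φ_zero, add_zero, left_eq_add] at h

theorem γ_eq_of_closure_eq_top {T : Set Δ₁}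
    (hT : AddSubgroup.closure (Set.range ofg₁.φ ∪ T) = ⊤) {a b : N}
    (hβ : ∀ h, sq.β a h a = sq.β b h b) (hγ : ∀ x ∈ T, sq.γ x a = sq.γ x b) (x : Δ₁) :
    sq.γ x a = sq.γ x b := by
  have hle : AddSubgroup.closure (Set.range ofg₁.φ ∪ T) ≤ (sq.γHom a).eqLocus (sq.γHom b) := by
    rw [AddSubgroup.closure_le]
    rintro _ (⟨h, rfl⟩ | hx)
    · show sq.γ (ofg₁.φ h) a = sq.γ (ofg₁.φ h) b
      rw [sq.γ_φ, sq.γ_φ, hβ]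
    · exact hγ _ hx
  exact hle (hT ▸ AddSubgroup.mem_top x)

theorem periodic_γ_sub {x : Δ₁} {a b : N} (hγ : sq.γ x a = sq.γ x b)
    (hβ : ∀ m, sq.β a (ofg₁.ρ x) m = sq.β b (ofg₁.ρ x) m) : Function.Periodic (sq.γ x) (a - b) := by
  intro n
  have ha : n + (a - b) = (n - b) + a := by abel
  conv_rhs => rw [← sub_add_cancel n b]
  rw [ha, sq.γ_add_right, sq.γ_add_right, hγ, hβ]

theorem γ_eq_of_eqOn_closure {a b : Δ₁} (hρ : ofg₁.ρ a = ofg₁.ρ b) {S : Set N}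
    (hS : ∀ n ∈ S, sq.γ a n = sq.γ b n) {n : N} (hn : n ∈ AddSubgroup.closure S) :
    sq.γ a n = sq.γ b n := by
  induction hn using AddSubgroup.closure_induction with
  | mem n hn => exact hS n hn
  | zero => rw [sq.γ_zero_right, sq.γ_zero_right]
  | add n n' _ _ ih ih' => rw [sq.γ_add_right, sq.γ_add_right, ih, ih', hρ]
  | neg n _ ih =>
    have ha := sq.γ_add_right a n (-n)
    have hb := sq.γ_add_right b n (-n)
    rw [add_neg_cancel, sq.γ_zero_right, ih, hρ] at ha
    rw [add_neg_cancel, sq.γ_zero_right] at hb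
    exact add_left_cancel (ha.symm.trans hb)

theorem γ_eq_zero_of_mem_closure {I : Type} {u v : I → Δ₁} {n : N}
    (huv : ∀ i, sq.γ (u i) n = sq.γ (v i) n) {x : Δ₁}
    (hx : x ∈ AddSubgroup.closure {x | ∃ i, x = u i - v i}) : sq.γ x n = 0 := by
  have hle : AddSubgroup.closure {x | ∃ i, x = u i - v i} ≤ (sq.γHom n).ker := by
    rw [AddSubgroup.closure_le]
    rintro _ ⟨i, rfl⟩
    show sq.γHom n (u i - v i) = 0
    rw [map_sub, sub_eq_zero]
    exact huv i
  exact hle hx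

open QuotientAddGroup in
def quotientLift (X : AddSubgroup Δ₁) [X.Normal] (ofgQ : OddFormGroupStr hg₁ (Δ₁ ⧸ X))
    (hQφ : ∀ h, ofgQ.φ h = (ofg₁.φ h : Δ₁ ⧸ X)) (hQπ : ∀ x : Δ₁, ofgQ.π (x : Δ₁ ⧸ X) = ofg₁.π x)
    (hQρ : ∀ x : Δ₁, ofgQ.ρ (x : Δ₁ ⧸ X) = ofg₁.ρ x) (Y : AddSubgroup N)
    (hα : ∀ m n₁ n₂, n₁ - n₂ ∈ Y → sq.α m n₁ = sq.α m n₂)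
    (hβ : ∀ n₁ n₂ h n₃ n₄, n₁ - n₂ ∈ Y → n₃ - n₄ ∈ Y → sq.β n₁ h n₃ = sq.β n₂ h n₄)
    (hγX : ∀ x ∈ X, ∀ n, sq.γ x n = 0) (hγY : ∀ x, ∀ y ∈ Y, Function.Periodic (sq.γ x) y) :
    SqOFG ofgQ ofg₂ (N ⧸ Y) where
  α m q := Quotient.liftOn' q (sq.α m) fun a b hab =>
    hα m a b (eq_iff_sub_mem.mp (Quotient.sound' hab))
  β q h q' := Quotient.liftOn₂' q q' (sq.β · h ·) fun a b c d hac hbd =>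
    hβ a c h b d (eq_iff_sub_mem.mp (Quotient.sound' hac))
      (eq_iff_sub_mem.mp (Quotient.sound' hbd))
  γ p q := Quotient.liftOn₂' p q sq.γ fun a b c d hac hbd => by
    have hx : -a + c ∈ X := leftRel_apply.mp hac
    have hy : -b + d ∈ Y := leftRel_apply.mp hbd
    calc sq.γ a b = sq.γ c b := by
          rw [← add_neg_cancel_left a c, sq.γ_add, hγX _ hx, add_zero]
      _ = sq.γ c d := by rw [← hγY c _ hy b, add_neg_cancel_left]
  α_add_left m m' := by rintro ⟨n⟩; exact sq.α_add_left m m' n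
  α_add_right m := by rintro ⟨n⟩ ⟨n'⟩; exact sq.α_add_right m n n'
  β_add₁ := by rintro ⟨a⟩ ⟨b⟩ h ⟨c⟩; exact sq.β_add₁ a b h c
  β_add₂ := by rintro ⟨a⟩ h h' ⟨b⟩; exact sq.β_add₂ a h h' b
  β_add₃ := by rintro ⟨a⟩ h ⟨b⟩ ⟨c⟩; exact sq.β_add₃ a h b c
  bar_β := by rintro ⟨a⟩ h ⟨b⟩; exact sq.bar_β a h b
  pair_α := by rintro m ⟨a⟩ m' ⟨b⟩; exact sq.pair_α m a m' b
  π_γ := by rintro ⟨x⟩ ⟨n⟩; exact hQπ x ▸ sq.π_γ x n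
  γ_φ h := by rintro ⟨n⟩; rw [hQφ]; exact sq.γ_φ h n
  γ_add := by rintro ⟨x⟩ ⟨x'⟩ ⟨n⟩; exact sq.γ_add x x' n
  ρ_γ := by rintro ⟨x⟩ ⟨n⟩; exact hQρ x ▸ sq.ρ_γ x n
  γ_add_right := by rintro ⟨x⟩ ⟨n⟩ ⟨n'⟩; exact hQρ x ▸ sq.γ_add_right x n n'

end SqOFG

theorem statement7_general {M₁ H₁ M₂ H₂ Δ₁ Δ₂ N : Type}
    [AddCommGroup M₁] [AddCommGroup H₁] [AddCommGroup M₂] [AddCommGroup H₂]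
    [AddGroup Δ₁] [AddGroup Δ₂] [AddCommGroup N]
    {hg₁ : HermitianGroup M₁ H₁} {hg₂ : HermitianGroup M₂ H₂}
    {ofg₁ : OddFormGroupStr hg₁ Δ₁} {ofg₂ : OddFormGroupStr hg₂ Δ₂}
    (sq : SqOFG ofg₁ ofg₂ N)
    {I J : Type} (u v : I → Δ₁)
    (hρ : ∀ i, ofg₁.ρ (u i) = ofg₁.ρ (v i))
    (X : AddSubgroup Δ₁)
    (hX : X = AddSubgroup.closure {x | ∃ i, x = u i - v i})
    (hnX : X.Normal)
    -- (M₁, H₁, Δ₁/X) is a well-defined odd form group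
    (ofgQ : @OddFormGroupStr M₁ H₁ _ _ hg₁ (Δ₁ ⧸ X)
      (@QuotientAddGroup.Quotient.addGroup Δ₁ _ X hnX))
    (hQφ : ∀ h', ofgQ.φ h' = QuotientAddGroup.mk (ofg₁.φ h'))
    (hQπ : ∀ x : Δ₁, ofgQ.π (QuotientAddGroup.mk x) = ofg₁.π x)
    (hQρ : ∀ x : Δ₁, ofgQ.ρ (QuotientAddGroup.mk x) = ofg₁.ρ x)
    (n' n'' : J → N) (Y : AddSubgroup N)
    (hY : Y = AddSubgroup.closure {y | ∃ j, y = n' j - n'' j})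
    -- γ(uᵢ, n) = γ(vᵢ, n) for all n in a fixed generating set of N
    (SN : Set N) (hSN : AddSubgroup.closure SN = ⊤)
    (hγ₁ : ∀ i, ∀ n ∈ SN, sq.γ (u i) n = sq.γ (v i) n)
    -- γ(u, nⱼ) = γ(u, n'ⱼ) for all u in a fixed generating set of the odd form parameter Δ₁
    (T : Set Δ₁) (hT : AddSubgroup.closure (Set.range ofg₁.φ ∪ T) = ⊤)
    (hγ₂ : ∀ x ∈ T, ∀ j, sq.γ x (n' j) = sq.γ x (n'' j))
    -- (α, β) factors through (M₁, H₁) × (N / Y)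
    (hα : ∀ m n₁ n₂, n₁ - n₂ ∈ Y → sq.α m n₁ = sq.α m n₂)
    (hβ : ∀ n₁ n₂ h n₃ n₄, n₁ - n₂ ∈ Y → n₃ - n₄ ∈ Y →
      sq.β n₁ h n₃ = sq.β n₂ h n₄) :
    ∃ sq' : @SqOFG M₁ H₁ M₂ H₂ _ _ _ _ hg₁ hg₂ (Δ₁ ⧸ X) Δ₂
        (@QuotientAddGroup.Quotient.addGroup Δ₁ _ X hnX) _ ofgQ ofg₂ (N ⧸ Y) _,
      (∀ m n, sq'.α m (QuotientAddGroup.mk n) = sq.α m n) ∧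
      (∀ n₁ h n₂, sq'.β (QuotientAddGroup.mk n₁) h (QuotientAddGroup.mk n₂) = sq.β n₁ h n₂) ∧
      (∀ x n, sq'.γ (QuotientAddGroup.mk x) (QuotientAddGroup.mk n) = sq.γ x n) := by
  have hYgen : ∀ j, n' j - n'' j ∈ Y := fun j => hY ▸ AddSubgroup.subset_closure ⟨j, rfl⟩
  have hγY : ∀ x, ∀ y ∈ Y, Function.Periodic (sq.γ x) y := by
    intro x y hy
    refine Function.periodic_of_mem_addSubgroup_closure ?_ (hY ▸ hy)
    rintro _ ⟨j, rfl⟩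
    exact sq.periodic_γ_sub (sq.γ_eq_of_closure_eq_top hT
      (fun h => hβ _ _ h _ _ (hYgen j) (hYgen j)) (fun x hx => hγ₂ x hx j) x)
      (fun m => hβ _ _ _ m m (hYgen j) (by simp))
  have huv : ∀ i n, sq.γ (u i) n = sq.γ (v i) n := fun i n =>
    sq.γ_eq_of_eqOn_closure (hρ i) (hγ₁ i) (hSN ▸ AddSubgroup.mem_top n)
  have hγX : ∀ x ∈ X, ∀ n, sq.γ x n = 0 := fun x hx n =>
    sq.γ_eq_zero_of_mem_closure (huv · n) (hX ▸ hx)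
  exact ⟨sq.quotientLift X ofgQ hQφ hQπ hQρ Y hα hβ hγX hγY,
    fun _ _ => rfl, fun _ _ _ => rfl, fun _ _ => rfl⟩

/-- Lemma `ofg-sq-fact`. -/
theorem statement7 {M₁ H₁ M₂ H₂ Δ₁ Δ₂ N : Type}
    [AddCommGroup M₁] [AddCommGroup H₁] [AddCommGroup M₂] [AddCommGroup H₂]
    [AddGroup Δ₁] [AddGroup Δ₂] [AddCommGroup N]
    {hg₁ : HermitianGroup M₁ H₁} {hg₂ : HermitianGroup M₂ H₂}
    {ofg₁ : OddFormGroupStr hg₁ Δ₁} {ofg₂ : OddFormGroupStr hg₂ Δ₂}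
    (sq : SqOFG ofg₁ ofg₂ N)
    {I J : Type} (u v : I → Δ₁)
    (hπ : ∀ i, ofg₁.π (u i) = ofg₁.π (v i))
    (hρ : ∀ i, ofg₁.ρ (u i) = ofg₁.ρ (v i))
    (X : AddSubgroup Δ₁)
    (hX : X = AddSubgroup.closure {x | ∃ i, x = u i - v i})
    (hnX : X.Normal)
    -- (M₁, H₁, Δ₁/X) is a well-defined odd form group
    (ofgQ : @OddFormGroupStr M₁ H₁ _ _ hg₁ (Δ₁ ⧸ X)
      (@QuotientAddGroup.Quotient.addGroup Δ₁ _ X hnX))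
    (hQφ : ∀ h', ofgQ.φ h' = QuotientAddGroup.mk (ofg₁.φ h'))
    (hQπ : ∀ x : Δ₁, ofgQ.π (QuotientAddGroup.mk x) = ofg₁.π x)
    (hQρ : ∀ x : Δ₁, ofgQ.ρ (QuotientAddGroup.mk x) = ofg₁.ρ x)
    (n' n'' : J → N) (Y : AddSubgroup N)
    (hY : Y = AddSubgroup.closure {y | ∃ j, y = n' j - n'' j})
    -- γ(uᵢ, n) = γ(vᵢ, n) for all n in a fixed generating set of N
    (SN : Set N) (hSN : AddSubgroup.closure SN = ⊤)
    (hγ₁ : ∀ i, ∀ n ∈ SN, sq.γ (u i) n = sq.γ (v i) n)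
    -- γ(u, nⱼ) = γ(u, n'ⱼ) for all u in a fixed generating set of the odd form parameter Δ₁
    (T : Set Δ₁) (hT : AddSubgroup.closure (Set.range ofg₁.φ ∪ T) = ⊤)
    (hγ₂ : ∀ x ∈ T, ∀ j, sq.γ x (n' j) = sq.γ x (n'' j))
    -- (α, β) factors through (M₁, H₁) × (N / Y)
    (hα : ∀ m n₁ n₂, n₁ - n₂ ∈ Y → sq.α m n₁ = sq.α m n₂)
    (hβ : ∀ n₁ n₂ h n₃ n₄, n₁ - n₂ ∈ Y → n₃ - n₄ ∈ Y →
      sq.β n₁ h n₃ = sq.β n₂ h n₄) :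
    ∃ sq' : @SqOFG M₁ H₁ M₂ H₂ _ _ _ _ hg₁ hg₂ (Δ₁ ⧸ X) Δ₂
        (@QuotientAddGroup.Quotient.addGroup Δ₁ _ X hnX) _ ofgQ ofg₂ (N ⧸ Y) _,
      (∀ m n, sq'.α m (QuotientAddGroup.mk n) = sq.α m n) ∧
      (∀ n₁ h n₂, sq'.β (QuotientAddGroup.mk n₁) h (QuotientAddGroup.mk n₂) = sq.β n₁ h n₂) ∧
      (∀ x n, sq'.γ (QuotientAddGroup.mk x) (QuotientAddGroup.mk n) = sq.γ x n) :=
  statement7_general sq u v hρ X hX hnX ofgQ hQφ hQπ hQρ n' n'' Y hY SN hSN hγ₁ T hT hγ₂ hα hβ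
end

section
/- Let (α_{ij}, β_{ij}, γ_{ij}) : (M_i, H_i, Δ_i) × N_{ij} → (M_j, H_j, Δ_j) be sesquiquadratic maps of odd form groups for 1 ≤ i < j ≤ 3 and let μ : N₁₂ × N₂₃ → N₁₃ be a biadditive map. Suppose that (α_{ij}, β_{ij}) together with μ satisfy the associative law for hermitian groups, and that γ₂₃(γ₁₂(u, n₁₂), n₂₃) = γ₁₃(u, μ(n₁₂, n₂₃)) holds for all u in a fixed set of elements generating the odd form parameter Δ₁ (i.e. whose images generate Δ₁/φ(H₁)), all n₁₂ in a fixed generating set of N₁₂, and all n₂₃ in a fixed generating set of N₂₃. Then γ₂₃(γ₁₂(u, n₁₂), n₂₃) = γ₁₃(u, μ(n₁₂, n₂₃)) holds for all u ∈ Δ₁, n₁₂ ∈ N₁₂, n₂₃ ∈ N₂₃, i.e. the three sesquiquadratic maps together with μ satisfy the full associative law. -/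
section Aux

private lemma addhom_zero {A B : Type} [AddGroup A] [AddGroup B] (f : A → B)
    (hf : ∀ a a', f (a + a') = f a + f a') : f 0 = 0 := by
  have h := hf 0 0
  rw [add_zero] at h
  exact (left_eq_add.mp h)

private lemma addhom_neg {A B : Type} [AddGroup A] [AddGroup B] (f : A → B)
    (hf : ∀ a a', f (a + a') = f a + f a') (a : A) : f (-a) = -(f a) := by
  have h : f a + f (-a) = 0 := by
    rw [← hf, add_neg_cancel, addhom_zero f hf]
  exact eq_neg_of_add_eq_zero_right h

variable {M₁ H₁ M₂ H₂ : Type} [AddCommGroup M₁] [AddCommGroup H₁]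
    [AddCommGroup M₂] [AddCommGroup H₂]
    {hg₁ : HermitianGroup M₁ H₁} {hg₂ : HermitianGroup M₂ H₂}
    {Δ₁ Δ₂ : Type} [AddGroup Δ₁] [AddGroup Δ₂]
    {ofg₁ : OddFormGroupStr hg₁ Δ₁} {ofg₂ : OddFormGroupStr hg₂ Δ₂}
    {N : Type} [AddCommGroup N]

private lemma φ_zero' (ofg : OddFormGroupStr hg₁ Δ₁) : ofg.φ 0 = 0 :=
  addhom_zero ofg.φ ofg.φ_add

private lemma γ_zero_left (sq : SqOFG ofg₁ ofg₂ N) (n : N) : sq.γ 0 n = 0 :=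
  addhom_zero (fun u => sq.γ u n) (fun u u' => sq.γ_add u u' n)

private lemma γ_neg_left (sq : SqOFG ofg₁ ofg₂ N) (u : Δ₁) (n : N) :
    sq.γ (-u) n = -(sq.γ u n) :=
  addhom_neg (fun u => sq.γ u n) (fun u u' => sq.γ_add u u' n) u

private lemma β_zero_left (sq : SqOFG ofg₁ ofg₂ N) (h : H₁) (n : N) :
    sq.β 0 h n = 0 :=
  addhom_zero (fun m => sq.β m h n) (fun a a' => sq.β_add₁ a a' h n)

private lemma γ_zero_right (sq : SqOFG ofg₁ ofg₂ N) (u : Δ₁) : sq.γ u 0 = 0 := by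
  have h := sq.γ_add_right u 0 0
  rw [add_zero, β_zero_left, φ_zero', add_zero] at h
  exact (left_eq_add.mp h)

private lemma γ_neg_right (sq : SqOFG ofg₁ ofg₂ N) (u : Δ₁) (n : N) :
    sq.γ u (-n) = -(sq.γ u n + ofg₂.φ (sq.β (-n) (ofg₁.ρ u) n)) := by
  have h := sq.γ_add_right u n (-n)
  rw [add_neg_cancel, γ_zero_right] at h
  exact eq_neg_of_add_eq_zero_right h.symm

end Aux

/-- Lemma `ofg-sq-ass`. -/
theorem statement8 {M₁ H₁ M₂ H₂ M₃ H₃ Δ₁ Δ₂ Δ₃ N₁₂ N₂₃ N₁₃ : Type}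
    [AddCommGroup M₁] [AddCommGroup H₁] [AddCommGroup M₂] [AddCommGroup H₂]
    [AddCommGroup M₃] [AddCommGroup H₃]
    [AddGroup Δ₁] [AddGroup Δ₂] [AddGroup Δ₃]
    [AddCommGroup N₁₂] [AddCommGroup N₂₃] [AddCommGroup N₁₃]
    {hg₁ : HermitianGroup M₁ H₁} {hg₂ : HermitianGroup M₂ H₂}
    {hg₃ : HermitianGroup M₃ H₃}
    {ofg₁ : OddFormGroupStr hg₁ Δ₁} {ofg₂ : OddFormGroupStr hg₂ Δ₂}
    {ofg₃ : OddFormGroupStr hg₃ Δ₃}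
    (sq₁₂ : SqOFG ofg₁ ofg₂ N₁₂) (sq₂₃ : SqOFG ofg₂ ofg₃ N₂₃)
    (sq₁₃ : SqOFG ofg₁ ofg₃ N₁₃)
    (μ : N₁₂ → N₂₃ → N₁₃)
    (μ_add_left : ∀ a a' b, μ (a + a') b = μ a b + μ a' b)
    (μ_add_right : ∀ a b b', μ a (b + b') = μ a b + μ a b')
    -- the hermitian-level associative law
    (hα : ∀ m n₁₂ n₂₃, sq₂₃.α (sq₁₂.α m n₁₂) n₂₃ = sq₁₃.α m (μ n₁₂ n₂₃))
    (hβ : ∀ n₁₂ n₂₃ h n₁₂' n₂₃',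
      sq₂₃.β n₂₃ (sq₁₂.β n₁₂ h n₁₂') n₂₃' = sq₁₃.β (μ n₁₂ n₂₃) h (μ n₁₂' n₂₃'))
    -- generating sets
    (T : Set Δ₁) (hT : AddSubgroup.closure (Set.range ofg₁.φ ∪ T) = ⊤)
    (S₁₂ : Set N₁₂) (hS₁₂ : AddSubgroup.closure S₁₂ = ⊤)
    (S₂₃ : Set N₂₃) (hS₂₃ : AddSubgroup.closure S₂₃ = ⊤)
    -- γ-associativity on generators
    (hγ : ∀ x ∈ T, ∀ n₁₂ ∈ S₁₂, ∀ n₂₃ ∈ S₂₃,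
      sq₂₃.γ (sq₁₂.γ x n₁₂) n₂₃ = sq₁₃.γ x (μ n₁₂ n₂₃)) :
    ∀ (x : Δ₁) (n₁₂ : N₁₂) (n₂₃ : N₂₃),
      sq₂₃.γ (sq₁₂.γ x n₁₂) n₂₃ = sq₁₃.γ x (μ n₁₂ n₂₃) := by

  -- abbreviation for the goal predicate
  set E : Δ₁ → N₁₂ → N₂₃ → Prop :=
    fun x a b => sq₂₃.γ (sq₁₂.γ x a) b = sq₁₃.γ x (μ a b) with hE
  -- biadditivity consequences for μ
  have μ0r : ∀ a, μ a 0 = 0 := fun a =>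
    addhom_zero (fun b => μ a b) (fun b b' => μ_add_right a b b')
  have μnr : ∀ a b, μ a (-b) = -(μ a b) := fun a b =>
    addhom_neg (fun b => μ a b) (fun b b' => μ_add_right a b b') b
  have μ0l : ∀ b, μ 0 b = 0 := fun b =>
    addhom_zero (fun a => μ a b) (fun a a' => μ_add_left a a' b)
  have μnl : ∀ a b, μ (-a) b = -(μ a b) := fun a b =>
    addhom_neg (fun a => μ a b) (fun a a' => μ_add_left a a' b) a
  -- the φ-case holds everywhere
  have hφcase : ∀ h a b, E (ofg₁.φ h) a b := by
    intro h a b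
    simp only [hE]
    rw [sq₁₂.γ_φ, sq₂₃.γ_φ, sq₁₃.γ_φ, hβ]
  -- step 1: extend over n₂₃
  have step1 : ∀ (x : Δ₁) (a : N₁₂), (∀ b ∈ S₂₃, E x a b) → ∀ b, E x a b := by
    intro x a hgen b
    let K : AddSubgroup N₂₃ :=
      { carrier := {b | E x a b}
        zero_mem' := by
          simp only [hE, Set.mem_setOf_eq]
          rw [γ_zero_right, μ0r, γ_zero_right]
        add_mem' := by
          intro b b' hb hb'
          simp only [hE, Set.mem_setOf_eq] at hb hb' ⊢
          rw [sq₂₃.γ_add_right, μ_add_right, sq₁₃.γ_add_right, hb, hb',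
            sq₁₂.ρ_γ, hβ]
        neg_mem' := by
          intro b hb
          simp only [hE, Set.mem_setOf_eq] at hb ⊢
          rw [γ_neg_right, μnr, γ_neg_right, hb, sq₁₂.ρ_γ, hβ, μnr] }
    have hle : AddSubgroup.closure S₂₃ ≤ K := (AddSubgroup.closure_le K).2 hgen
    rw [hS₂₃] at hle
    exact hle (AddSubgroup.mem_top b)
  -- step 2: extend over n₁₂
  have step2 : ∀ (x : Δ₁), (∀ a ∈ S₁₂, ∀ b, E x a b) → ∀ a b, E x a b := by
    intro x hgen a
    let K : AddSubgroup N₁₂ :=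
      { carrier := {a | ∀ b, E x a b}
        zero_mem' := by
          intro b
          simp only [hE, Set.mem_setOf_eq]
          rw [γ_zero_right, γ_zero_left, μ0l, γ_zero_right]
        add_mem' := by
          intro a a' ha ha' b
          simp only [hE, Set.mem_setOf_eq] at ha ha' ⊢
          rw [sq₁₂.γ_add_right, sq₂₃.γ_add, sq₂₃.γ_add, ha, ha',
            sq₂₃.γ_φ, hβ, μ_add_left, sq₁₃.γ_add_right]
        neg_mem' := by
          intro a ha b
          simp only [hE, Set.mem_setOf_eq] at ha ⊢
          rw [γ_neg_right, γ_neg_left, sq₂₃.γ_add, ha,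
            sq₂₃.γ_φ, hβ, μnl, γ_neg_right] }
    have hle : AddSubgroup.closure S₁₂ ≤ K := (AddSubgroup.closure_le K).2 hgen
    rw [hS₁₂] at hle
    exact hle (AddSubgroup.mem_top a)
  -- step 3: extend over x
  intro x
  let K : AddSubgroup Δ₁ :=
    { carrier := {x | ∀ a b, E x a b}
      zero_mem' := by
        intro a b
        simp only [hE, Set.mem_setOf_eq]
        rw [γ_zero_left, γ_zero_left, γ_zero_left]
      add_mem' := by
        intro x y hx hy a b
        simp only [hE, Set.mem_setOf_eq] at hx hy ⊢
        rw [sq₁₂.γ_add, sq₂₃.γ_add, hx, hy, sq₁₃.γ_add]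
      neg_mem' := by
        intro x hx a b
        simp only [hE, Set.mem_setOf_eq] at hx ⊢
        rw [γ_neg_left, γ_neg_left, hx, γ_neg_left] }
  have hsub : Set.range ofg₁.φ ∪ T ⊆ K := by
    rintro y (⟨h, rfl⟩ | hy)
    · exact fun a b => hφcase h a b
    · exact step2 y (fun a ha => step1 y a (fun b hb => hγ y hy a ha b hb))
  have hle : AddSubgroup.closure (Set.range ofg₁.φ ∪ T) ≤ K :=
    (AddSubgroup.closure_le K).2 hsub
  rw [hT] at hle
  exact hle (AddSubgroup.mem_top x)
end

section
/- Let (R_{ij}, Δ⁰_i) be a partial graded odd form ring of rank ℓ ≥ 3 satisfying (R29) and (R30). Then every R_{ij} is abelian, and every Δ⁰_i is 2-step nilpotent with nilpotent filtration D_i^min := ⟨R_{−i,j} ∗ R_{ji} : j with |j| ∉ {0, |i|}⟩, i.e. D_i^min is a central subgroup of Δ⁰_i containing the commutator subgroup of Δ⁰_i. Moreover: D_i^min ∘ Δ⁰_j = 0; D_i^min · R_{ij} ⊆ D_j^min; and D_i^min = ⟨R_{−i,j} ∗ R_{ji}⟩ already for any single fixed j with |j| ∉ {0, |i|}. -/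
/-- Transport along equalities of indices. -/
def rc2 {F : ℤ → ℤ → Type} {i j i' j' : ℤ} (hi : i = i') (hj : j = j') (a : F i j) :
    F i' j' := cast (by rw [hi, hj]) a

/-- An admissible index: nonzero and of absolute value at most `ℓ`. -/
def adm (ℓ : ℕ) (i : ℤ) : Prop := i ≠ 0 ∧ |i| ≤ (ℓ : ℤ)

/-- Two admissible indices with distinct absolute values. -/
def adm2 (ℓ : ℕ) (i j : ℤ) : Prop := adm ℓ i ∧ adm ℓ j ∧ |i| ≠ |j|

/-- Three admissible indices with pairwise distinct absolute values. -/
def adm3 (ℓ : ℕ) (i j k : ℤ) : Prop :=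
  adm ℓ i ∧ adm ℓ j ∧ adm ℓ k ∧ |i| ≠ |j| ∧ |i| ≠ |k| ∧ |j| ≠ |k|

/-- Four admissible indices with pairwise distinct absolute values. -/
def adm4 (ℓ : ℕ) (i j k l : ℤ) : Prop :=
  adm3 ℓ i j k ∧ adm ℓ l ∧ |i| ≠ |l| ∧ |j| ≠ |l| ∧ |k| ≠ |l|

/-- A partial graded odd form ring of rank `ℓ` (components `R i j` for nonzero
`i, j ∈ [-ℓ, ℓ]` with `|i| ≠ |j|` and odd form parameters `Δ i` for nonzero `i`,
with all operations and the identities (R1)–(R28); operations at inadmissible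
indices are junk data, all axioms being guarded by admissibility). -/
structure PGOFR (ℓ : ℕ) where
  R : ℤ → ℤ → Type
  Δ : ℤ → Type
  [instR : ∀ i j, AddGroup (R i j)]
  [instΔ : ∀ i, AddGroup (Δ i)]
  inv : ∀ i j, R i j → R (-j) (-i)
  mul : ∀ i j k, R i j → R j k → R i k
  star : ∀ i j, R (-i) j → R j i → Δ i
  circ : ∀ i j, Δ i → Δ j → R (-i) j
  tri : ∀ i j, Δ i → R i j → R (-i) j
  dot : ∀ i j, Δ i → R i j → Δ j
  -- the involution is an anti-isomorphism
  inv_add : ∀ i j, adm2 ℓ i j → ∀ a b : R i j, inv i j (a + b) = inv i j b + inv i j a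
  inv_inv : ∀ i j, adm2 ℓ i j → ∀ a : R i j,
    rc2 (F := R) (neg_neg i) (neg_neg j) (inv (-j) (-i) (inv i j a)) = a
  -- (R1)
  r1 : ∀ i j k, adm3 ℓ i j k → ∀ (a : R i j) (b : R j k) (c : R i k),
    mul i j k a b + c = c + mul i j k a b
  -- (R2)
  r2 : ∀ i j k, adm3 ℓ i j k → ∀ (a b : R i j) (c : R j k),
    mul i j k (a + b) c = mul i j k a c + mul i j k b c
  -- (R3)
  r3 : ∀ i j k, adm3 ℓ i j k → ∀ (a : R i j) (b c : R j k),
    mul i j k a (b + c) = mul i j k a b + mul i j k a c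
  -- (R4)
  r4 : ∀ i j k, adm3 ℓ i j k → ∀ (a : R i j) (b : R j k),
    inv i k (mul i j k a b) = mul (-k) (-j) (-i) (inv j k b) (inv i j a)
  -- (R5)
  r5 : ∀ i j, adm2 ℓ i j → ∀ (a : R (-i) j) (b : R j i) (u : Δ i),
    star i j a b + u = u + star i j a b
  -- (R6)
  r6 : ∀ i j, adm2 ℓ i j → ∀ (a b : R (-i) j) (c : R j i),
    star i j (a + b) c = star i j a c + star i j b c
  -- (R7)
  r7 : ∀ i j, adm2 ℓ i j → ∀ (a : R (-i) j) (b c : R j i),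
    star i j a (b + c) = star i j a b + star i j a c
  -- (R8)
  r8 : ∀ i j, adm2 ℓ i j → ∀ (a : R (-i) j) (b : R j i),
    star i j a b +
      star i (-j) (inv j i b) (rc2 (F := R) rfl (neg_neg i) (inv (-i) j a)) = 0
  -- (R9)
  r9 : ∀ i j, adm2 ℓ i j → ∀ (u : Δ i) (v : Δ j) (a : R (-i) j),
    a + circ i j u v = circ i j u v + a
  -- (R10)
  r10 : ∀ i j, adm2 ℓ i j → ∀ (u v : Δ i) (w : Δ j),
    circ i j (u + v) w = circ i j u w + circ i j v w
  -- (R11)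
  r11 : ∀ i j, adm2 ℓ i j → ∀ (u : Δ i) (v w : Δ j),
    circ i j u (v + w) = circ i j u v + circ i j u w
  -- (R12)
  r12 : ∀ i j, adm2 ℓ i j → ∀ (u : Δ i) (v : Δ j),
    rc2 (F := R) rfl (neg_neg i) (inv (-i) j (circ i j u v)) = circ j i v u
  -- (R13)
  r13 : ∀ i j, adm2 ℓ i j → ∀ (u : Δ i) (a : R (-j) (-i)) (b : R (-i) j),
    circ i j u (star j (-i) a b) +
      tri i j u (-(rc2 (F := R) (neg_neg i) (neg_neg j) (inv (-j) (-i) a))) + b =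
    b + tri i j u (-(rc2 (F := R) (neg_neg i) (neg_neg j) (inv (-j) (-i) a)))
  -- (R14)
  r14 : ∀ i j, adm2 ℓ i j → ∀ (u : Δ i) (a : R i j) (v : Δ j),
    dot i j u a + v = v + dot i j u a - star j (-i) (inv i j a) (circ i j u v)
  -- (R15)
  r15 : ∀ i j, adm2 ℓ i j → ∀ (u v : Δ i) (a : R i j),
    dot i j (u + v) a = dot i j u a + dot i j v a
  -- (R16)
  r16 : ∀ i j, adm2 ℓ i j → ∀ (u v : Δ i) (a : R i j),
    tri i j (u + v) a = tri i j v a + circ i j u (dot i j v (-a)) + tri i j u a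
  -- (R17)
  r17 : ∀ i j, adm2 ℓ i j → ∀ (u : Δ i) (a b : R i j),
    tri i j u (a + b) = tri i j u a + tri i j u b
  -- (R18)
  r18 : ∀ i j, adm2 ℓ i j → ∀ (u : Δ i) (a b : R i j),
    dot i j u (a + b) = dot i j u a + star j (-i) (inv i j b) (tri i j u a) + dot i j u b
  -- (R19)
  r19 : ∀ i j k l, adm4 ℓ i j k l → ∀ (a : R i j) (b : R j k) (c : R k l),
    mul i k l (mul i j k a b) c = mul i j l a (mul j k l b c)
  -- (R20)
  r20 : ∀ i j k, adm3 ℓ i j k → ∀ (a : R (-i) j) (b : R j k) (c : R k i),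
    star i k (mul (-i) j k a b) c = star i j a (mul j k i b c)
  -- (R21)
  r21 : ∀ i j k, adm3 ℓ i j k → ∀ (u : Δ i) (a : R (-j) k) (b : R k j),
    circ i j u (star j k a b) = 0
  -- (R22)
  r22 : ∀ i j k, adm3 ℓ i j k → ∀ (u : Δ i) (v : Δ j) (a : R j k),
    circ i k u (dot j k v a) = mul (-i) j k (circ i j u v) a
  -- (R23)
  r23 : ∀ i j k, adm3 ℓ i j k → ∀ (u : Δ i) (a : R i j) (b : R i k),
    mul (-j) (-i) k (inv i j a) (tri i k u b) +
      circ j k (dot i j u a) (dot i k u b) +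
      mul (-j) i k (rc2 (F := R) rfl (neg_neg i) (inv (-i) j (tri i j u a))) b = 0
  -- (R24)
  r24 : ∀ i j k, adm3 ℓ i j k → ∀ (a : R (-i) j) (b : R j i) (c : R i k),
    tri i k (star i j a b) c =
      mul (-i) j k a (mul j i k b c) -
      mul (-i) (-j) k (inv j i b)
        (mul (-j) i k (rc2 (F := R) rfl (neg_neg i) (inv (-i) j a)) c)
  -- (R25)
  r25 : ∀ i j k, adm3 ℓ i j k → ∀ (a : R (-i) j) (b : R j i) (c : R i k),
    dot i k (star i j a b) c =
      star k j (mul (-k) (-i) j (inv i k c) a) (mul j i k b c)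
  -- (R26)
  r26 : ∀ i j k, adm3 ℓ i j k → ∀ (u : Δ i) (a : R i j) (b : R j k),
    mul (-i) j k (tri i j u a) b = tri i k u (mul i j k a b)
  -- (R27)
  r27 : ∀ i j k, adm3 ℓ i j k → ∀ (u : Δ i) (a : R i j) (b : R j k),
    tri j k (-(dot i j u a)) b =
      mul (-j) i k (rc2 (F := R) rfl (neg_neg i) (inv (-i) j (tri i j u a)))
        (mul i j k a b)
  -- (R28)
  r28 : ∀ i j k, adm3 ℓ i j k → ∀ (u : Δ i) (a : R i j) (b : R j k),
    dot j k (dot i j u a) b = dot i k u (mul i j k a b)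

attribute [instance] PGOFR.instR PGOFR.instΔ

namespace PGOFR

variable {ℓ : ℕ}

/-- Condition (R29). -/
def cond29 (o : PGOFR ℓ) : Prop :=
  ∀ i j k, adm3 ℓ i j k →
    AddSubgroup.closure
      ({x : o.R i j | ∃ a b, x = o.mul i k j a b} ∪
       {x : o.R i j | ∃ a b, x = o.mul i (-k) j a b}) = ⊤

/-- Condition (R30). -/
def cond30 (o : PGOFR ℓ) : Prop :=
  ∀ i j, adm2 ℓ i j →
    AddSubgroup.closure
      ({x : o.Δ i | ∃ u a, x = o.dot j i u a} ∪
       {x : o.Δ i | ∃ u a, x = o.dot (-j) i u a} ∪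
       {x : o.Δ i | ∃ a b, x = o.star i j a b}) = ⊤

/-- Associativity condition (A1). -/
def condA1 (o : PGOFR ℓ) : Prop :=
  ∀ i j k l m n : ℤ, adm3 ℓ i j k → |i| = |m| → |j| = |l| → |k| = |n| →
    ∀ (a : o.R i j) (b : o.R j k) (c : o.R k l) (d : o.R l m) (e : o.R m n),
      o.mul i j n a (o.mul j m n (o.mul j k m b (o.mul k l m c d)) e) =
      o.mul i l n (o.mul i k l (o.mul i j k a b) c) (o.mul l m n d e)

/-- Associativity condition (A2). -/
def condA2 (o : PGOFR ℓ) : Prop :=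
  ∀ i j k l m n : ℤ, adm3 ℓ i j k → |i| = |l| → |j| = |n| → |k| = |m| →
    ∀ (a : o.R i j) (b : o.R j k) (c : o.R k l) (d : o.R l m) (e : o.R m n),
      o.mul i k n (o.mul i j k a b) (o.mul k l n c (o.mul l m n d e)) =
      o.mul i m n (o.mul i l m (o.mul i j l a (o.mul j k l b c)) d) e

/-- Associativity condition (A3). -/
def condA3 (o : PGOFR ℓ) : Prop :=
  ∀ i j k l m n : ℤ, adm3 ℓ i j l → |i| = |k| → |j| = |m| → |l| = |n| →
    ∀ (a : o.R i j) (b : o.R j k) (c : o.R k l) (d : o.R l m) (e : o.R m n),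
      o.mul i m n (o.mul i l m (o.mul i j l a (o.mul j k l b c)) d) e =
      o.mul i j n a (o.mul j k n b (o.mul k m n (o.mul k l m c d) e))

/-- Associativity condition (A4). -/
def condA4 (o : PGOFR ℓ) : Prop :=
  ∀ i j k l m n : ℤ, adm3 ℓ i j k → |i| = |l| → |j| = |m| → |k| = |n| →
    ∀ (a : o.R i j) (b : o.R j k) (c : o.R k l) (d : o.R l m) (e : o.R m n),
      o.mul i m n (o.mul i k m (o.mul i j k a b) (o.mul k l m c d)) e =
      o.mul i j n a (o.mul j l n (o.mul j k l b c) (o.mul l m n d e))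

end PGOFR
namespace PGOFR

/-- The subgroup `D_i^min = ⟨R_{-i,j} ∗ R_{ji} : j⟩` of `Δ i`. -/
def Dmin {ℓ : ℕ} (o : PGOFR ℓ) (i : ℤ) : AddSubgroup (o.Δ i) :=
  AddSubgroup.closure {x | ∃ j, adm2 ℓ i j ∧ ∃ a b, x = o.star i j a b}

end PGOFR
section Aux

open AddSubgroup

variable {ℓ : ℕ}

private lemma pick2 (L : ℤ) (h3 : 3 ≤ L) (a : ℤ) :
    ∃ k : ℤ, k ≠ 0 ∧ |k| ≤ L ∧ a ≠ |k| := by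
  by_cases c1 : a = 1
  · exact ⟨2, by norm_num, by rw [show |(2:ℤ)| = 2 by norm_num]; omega,
      by rw [show |(2:ℤ)| = 2 by norm_num]; omega⟩
  · exact ⟨1, by norm_num, by rw [show |(1:ℤ)| = 1 by norm_num]; omega,
      by rw [show |(1:ℤ)| = 1 by norm_num]; omega⟩

private lemma pick3 (L : ℤ) (h3 : 3 ≤ L) (a b : ℤ) :
    ∃ k : ℤ, k ≠ 0 ∧ |k| ≤ L ∧ a ≠ |k| ∧ b ≠ |k| := by
  by_cases c1 : a = 1 ∨ b = 1
  · by_cases c2 : a = 2 ∨ b = 2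
    · by_cases c3 : a = b
      · exact ⟨3, by norm_num, by rw [show |(3:ℤ)| = 3 by norm_num]; omega,
          by rw [show |(3:ℤ)| = 3 by norm_num]; omega,
          by rw [show |(3:ℤ)| = 3 by norm_num]; omega⟩
      · exact ⟨3, by norm_num, by rw [show |(3:ℤ)| = 3 by norm_num]; omega,
          by rw [show |(3:ℤ)| = 3 by norm_num]; omega,
          by rw [show |(3:ℤ)| = 3 by norm_num]; omega⟩
    · exact ⟨2, by norm_num, by rw [show |(2:ℤ)| = 2 by norm_num]; omega,
        by rw [show |(2:ℤ)| = 2 by norm_num]; omega,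
        by rw [show |(2:ℤ)| = 2 by norm_num]; omega⟩
  · exact ⟨1, by norm_num, by rw [show |(1:ℤ)| = 1 by norm_num]; omega,
      by rw [show |(1:ℤ)| = 1 by norm_num]; omega,
      by rw [show |(1:ℤ)| = 1 by norm_num]; omega⟩

lemma adm.neg' {i : ℤ} (h : adm ℓ i) : adm ℓ (-i) :=
  ⟨neg_ne_zero.mpr h.1, by rw [abs_neg]; exact h.2⟩

lemma exists_adm2' (hl : 3 ≤ ℓ) {i : ℤ} (h : adm ℓ i) : ∃ j, adm2 ℓ i j := by
  have h3 : (3:ℤ) ≤ (ℓ:ℤ) := by exact_mod_cast hl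
  obtain ⟨k, hk0, hkl, hik⟩ := pick2 (ℓ:ℤ) h3 |i|
  exact ⟨k, h, ⟨hk0, hkl⟩, hik⟩

lemma exists_adm3' (hl : 3 ≤ ℓ) {i j : ℤ} (h : adm2 ℓ i j) : ∃ k, adm3 ℓ i j k := by
  have h3 : (3:ℤ) ≤ (ℓ:ℤ) := by exact_mod_cast hl
  obtain ⟨k, hk0, hkl, hik, hjk⟩ := pick3 (ℓ:ℤ) h3 |i| |j|
  exact ⟨k, h.1, h.2.1, ⟨hk0, hkl⟩, h.2.2, hik, hjk⟩

end Aux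

namespace PGOFR

open AddSubgroup

variable {ℓ : ℕ}

lemma rc2_zero (o : PGOFR ℓ) {i i' j j' : ℤ} (hi : i = i') (hj : j = j') :
    rc2 (F := o.R) hi hj (0 : o.R i j) = 0 := by
  subst hi; subst hj; rfl

lemma star_cast (o : PGOFR ℓ) {i j j' : ℤ} (h : j = j') (a : o.R (-i) j) (b : o.R j i) :
    o.star i j' (rc2 (F := o.R) rfl h a) (rc2 (F := o.R) h rfl b) = o.star i j a b := by
  subst h; rfl

lemma inv_zero (o : PGOFR ℓ) {i j : ℤ} (h : adm2 ℓ i j) : o.inv i j (0 : o.R i j) = 0 := by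
  have h0 := o.inv_add i j h 0 0
  rw [add_zero] at h0
  exact (add_left_cancel (a := o.inv i j 0) (by rw [← h0, add_zero])).symm

/-- `T i j`: the set of stars with index `j`. -/
def TS (o : PGOFR ℓ) (i j : ℤ) : Set (o.Δ i) := {x | ∃ a b, x = o.star i j a b}

lemma star_neg_mem (o : PGOFR ℓ) {i j : ℤ} (h : adm2 ℓ i j)
    (a : o.R (-i) (-j)) (b : o.R (-j) i) :
    o.star i (-j) a b ∈ closure (o.TS i j) := by
  have h' : adm2 ℓ i (-j) := ⟨h.1, h.2.1.neg', by rw [abs_neg]; exact h.2.2⟩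
  have h8 := o.r8 i (-j) h' a b
  have hc := o.star_cast (neg_neg j) (o.inv (-j) i b)
      (rc2 (F := o.R) rfl (neg_neg i) (o.inv (-i) (-j) a))
  rw [← hc] at h8
  have : o.star i (-j) a b = - o.star i j (rc2 (F := o.R) rfl (neg_neg j) (o.inv (-j) i b))
      (rc2 (F := o.R) (neg_neg j) rfl (rc2 (F := o.R) rfl (neg_neg i) (o.inv (-i) (-j) a))) :=
    eq_neg_of_add_eq_zero_left h8
  rw [this]
  exact neg_mem (subset_closure ⟨_, _, rfl⟩)

lemma star_mem_closure (o : PGOFR ℓ) (h29 : o.cond29) {i j k : ℤ}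
    (hij : adm2 ℓ i j) (hik : adm2 ℓ i k) (a : o.R (-i) k) (b : o.R k i) :
    o.star i k a b ∈ closure (o.TS i j) := by
  by_cases hkj : |k| = |j|
  · rcases abs_eq_abs.mp hkj with rfl | rfl
    · exact subset_closure ⟨a, b, rfl⟩
    · exact o.star_neg_mem hij a b
  · have h3 : adm3 ℓ k i j := ⟨hik.2.1, hij.1, hij.2.1, Ne.symm hik.2.2, hkj, hij.2.2⟩
    have htop := h29 k i j h3
    set g : o.R k i →+ o.Δ i := AddMonoidHom.mk' (fun x => o.star i k a x) (o.r7 i k hik a)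
      with hg
    have hb : b ∈ closure
        ({x : o.R k i | ∃ c d, x = o.mul k j i c d} ∪
         {x : o.R k i | ∃ c d, x = o.mul k (-j) i c d}) := by
      rw [htop]; exact mem_top b
    have hle : closure
        ({x : o.R k i | ∃ c d, x = o.mul k j i c d} ∪
         {x : o.R k i | ∃ c d, x = o.mul k (-j) i c d}) ≤
        (closure (o.TS i j)).comap g := by
      rw [closure_le]
      rintro x (⟨c, d, rfl⟩ | ⟨c, d, rfl⟩)
      · have hikj : adm3 ℓ i k j := ⟨hij.1, hik.2.1, hij.2.1, hik.2.2, hij.2.2, hkj⟩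
        have h20 := o.r20 i k j hikj a c d
        show o.star i k a (o.mul k j i c d) ∈ closure (o.TS i j)
        rw [← h20]
        exact subset_closure ⟨_, _, rfl⟩
      · have hikj : adm3 ℓ i k (-j) := ⟨hij.1, hik.2.1, hij.2.1.neg', hik.2.2,
          by rw [abs_neg]; exact hij.2.2, by rw [abs_neg]; exact hkj⟩
        have h20 := o.r20 i k (-j) hikj a c d
        show o.star i k a (o.mul k (-j) i c d) ∈ closure (o.TS i j)
        rw [← h20]
        exact o.star_neg_mem hij _ _
    exact mem_comap.mp (hle hb)

lemma dmin_eq (o : PGOFR ℓ) (h29 : o.cond29) {i j : ℤ} (hij : adm2 ℓ i j) :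
    o.Dmin i = closure (o.TS i j) := by
  refine le_antisymm ?_ ?_
  · rw [Dmin, closure_le]
    rintro x ⟨k, hik, a, b, rfl⟩
    exact o.star_mem_closure h29 hij hik a b
  · rw [closure_le]
    rintro x ⟨a, b, rfl⟩
    exact subset_closure ⟨j, hij, a, b, rfl⟩

lemma dmin_central (o : PGOFR ℓ) (i : ℤ) : o.Dmin i ≤ AddSubgroup.center (o.Δ i) := by
  rw [Dmin, closure_le]
  rintro x ⟨k, hik, a, b, rfl⟩
  exact AddSubgroup.mem_center_iff.mpr fun g => (o.r5 i k hik a b g).symm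

end PGOFR

namespace PGOFR

open AddSubgroup

variable {ℓ : ℕ}

lemma R_comm (o : PGOFR ℓ) (h29 : o.cond29) (hl : 3 ≤ ℓ) {i j : ℤ} (hij : adm2 ℓ i j) :
    ∀ a b : o.R i j, a + b = b + a := by
  obtain ⟨k, hk⟩ := exists_adm3' hl hij
  have htop := h29 i j k hk
  have hcen : (⊤ : AddSubgroup (o.R i j)) ≤ AddSubgroup.center (o.R i j) := by
    rw [← htop, closure_le]
    rintro x (⟨a, b, rfl⟩ | ⟨a, b, rfl⟩)
    · have h3 : adm3 ℓ i k j := ⟨hk.1, hk.2.2.1, hk.2.1, hk.2.2.2.2.1, hk.2.2.2.1,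
        Ne.symm hk.2.2.2.2.2⟩
      exact AddSubgroup.mem_center_iff.mpr fun g => (o.r1 i k j h3 a b g).symm
    · have h3 : adm3 ℓ i (-k) j := ⟨hk.1, hk.2.2.1.neg', hk.2.1,
        by rw [abs_neg]; exact hk.2.2.2.2.1, hk.2.2.2.1,
        by rw [abs_neg]; exact Ne.symm hk.2.2.2.2.2⟩
      exact AddSubgroup.mem_center_iff.mpr fun g => (o.r1 i (-k) j h3 a b g).symm
  intro a b
  exact (AddSubgroup.mem_center_iff.mp (hcen (AddSubgroup.mem_top a)) b).symm

lemma circ_dmin (o : PGOFR ℓ) (h29 : o.cond29) (hl : 3 ≤ ℓ) {i j : ℤ} (hij : adm2 ℓ i j) :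
    ∀ v ∈ o.Dmin i, ∀ u : o.Δ j, o.circ i j v u = 0 := by
  obtain ⟨k, hk⟩ := exists_adm3' hl hij
  have hik : adm2 ℓ i k := ⟨hk.1, hk.2.2.1, hk.2.2.2.2.1⟩
  intro v hv u
  rw [o.dmin_eq h29 hik] at hv
  set f : o.Δ i →+ o.R (-i) j :=
    AddMonoidHom.mk' (fun v => o.circ i j v u) (fun v w => o.r10 i j hij v w u) with hf
  have hle : closure (o.TS i k) ≤ f.ker := by
    rw [closure_le]
    rintro x ⟨a, b, rfl⟩
    have hji : adm2 ℓ j i := ⟨hij.2.1, hij.1, Ne.symm hij.2.2⟩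
    have hjik : adm3 ℓ j i k := ⟨hij.2.1, hij.1, hk.2.2.1, Ne.symm hij.2.2,
      hk.2.2.2.2.2, hk.2.2.2.2.1⟩
    have h12 := o.r12 j i hji u (o.star i k a b)
    have h21 := o.r21 j i k hjik u a b
    have hmji : adm2 ℓ (-j) i := ⟨hij.2.1.neg', hij.1, by rw [abs_neg]; exact Ne.symm hij.2.2⟩
    show f (o.star i k a b) = 0
    have : f (o.star i k a b) = o.circ i j (o.star i k a b) u := rfl
    rw [this, ← h12, h21, o.inv_zero hmji, o.rc2_zero]
  exact AddMonoidHom.mem_ker.mp (hle hv)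

lemma dot_dmin (o : PGOFR ℓ) (h29 : o.cond29) (hl : 3 ≤ ℓ) {i j : ℤ} (hij : adm2 ℓ i j) :
    ∀ v ∈ o.Dmin i, ∀ a : o.R i j, o.dot i j v a ∈ o.Dmin j := by
  obtain ⟨m, hm⟩ := exists_adm3' hl hij
  have him : adm2 ℓ i m := ⟨hm.1, hm.2.2.1, hm.2.2.2.2.1⟩
  intro v hv a
  rw [o.dmin_eq h29 him] at hv
  set f : o.Δ i →+ o.Δ j :=
    AddMonoidHom.mk' (fun v => o.dot i j v a) (fun u v => o.r15 i j hij u v a) with hf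
  have hle : closure (o.TS i m) ≤ (o.Dmin j).comap f := by
    rw [closure_le]
    rintro x ⟨c, d, rfl⟩
    have himj : adm3 ℓ i m j := ⟨hm.1, hm.2.2.1, hm.2.1, hm.2.2.2.2.1, hm.2.2.2.1,
      Ne.symm hm.2.2.2.2.2⟩
    have h25 := o.r25 i m j himj c d a
    have hjm : adm2 ℓ j m := ⟨hm.2.1, hm.2.2.1, hm.2.2.2.2.2⟩
    show f (o.star i m c d) ∈ o.Dmin j
    have : f (o.star i m c d) = o.dot i j (o.star i m c d) a := rfl
    rw [this, h25]
    exact subset_closure ⟨m, hjm, _, _, rfl⟩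
  exact mem_comap.mp (hle hv)

lemma comm_dmin (o : PGOFR ℓ) (h30 : o.cond30) (hl : 3 ≤ ℓ) {i : ℤ} (hi : adm ℓ i) :
    ∀ u v : o.Δ i, u + v - u - v ∈ o.Dmin i := by
  haveI hnorm : (o.Dmin i).Normal := by
    constructor
    intro n hn g
    have hc := AddSubgroup.mem_center_iff.mp (o.dmin_central i hn) g
    rw [hc, add_assoc]
    simpa using hn
  obtain ⟨j, hij⟩ := exists_adm2' hl hi
  have htop := h30 i j hij
  set mk : o.Δ i →+ o.Δ i ⧸ o.Dmin i := QuotientAddGroup.mk' (o.Dmin i) with hmk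
  have hker : ∀ s ∈ o.Dmin i, mk s = 0 := fun s hs => (QuotientAddGroup.eq_zero_iff s).mpr hs
  have hcomm : ∀ x ∈ ({x : o.Δ i | ∃ u a, x = o.dot j i u a} ∪
       {x : o.Δ i | ∃ u a, x = o.dot (-j) i u a} ∪
       {x : o.Δ i | ∃ a b, x = o.star i j a b}), ∀ u' : o.Δ i, mk (x + u') = mk (u' + x) := by
    rintro x ((⟨w, a, rfl⟩ | ⟨w, a, rfl⟩) | ⟨a, b, rfl⟩) <;> intro u'
    · have hji : adm2 ℓ j i := ⟨hij.2.1, hij.1, Ne.symm hij.2.2⟩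
      have h14 := o.r14 j i hji w a u'
      have hs : o.star i (-j) (o.inv j i a) (o.circ j i w u') ∈ o.Dmin i :=
        subset_closure ⟨-j, ⟨hi, hij.2.1.neg', by rw [abs_neg]; exact hij.2.2⟩, _, _, rfl⟩
      rw [h14, map_sub, hker _ hs, sub_zero]
    · have hji : adm2 ℓ (-j) i := ⟨hij.2.1.neg', hij.1, by rw [abs_neg]; exact Ne.symm hij.2.2⟩
      have h14 := o.r14 (-j) i hji w a u'
      have hs : o.star i (-(-j)) (o.inv (-j) i a) (o.circ (-j) i w u') ∈ o.Dmin i :=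
        subset_closure ⟨-(-j), ⟨hi, hij.2.1.neg'.neg',
          by rw [abs_neg, abs_neg]; exact hij.2.2⟩, _, _, rfl⟩
      rw [h14, map_sub, hker _ hs, sub_zero]
    · rw [o.r5 i j hij a b u']
  have hcen : (⊤ : AddSubgroup (o.Δ i)) ≤ (AddSubgroup.center _).comap mk := by
    rw [← htop, closure_le]
    intro x hx
    refine mem_comap.mpr (AddSubgroup.mem_center_iff.mpr fun q => ?_)
    refine QuotientAddGroup.induction_on q fun u' => ?_
    have : (↑u' : o.Δ i ⧸ o.Dmin i) = mk u' := rfl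
    rw [this, ← map_add, ← map_add]
    exact (hcomm x hx u').symm
  intro u v
  have hu := AddSubgroup.mem_center_iff.mp (mem_comap.mp (hcen (AddSubgroup.mem_top u))) (mk v)
  have : mk (u + v - u - v) = 0 := by
    rw [map_sub, map_sub, map_add, ← hu, add_sub_cancel_right, sub_self]
  exact (QuotientAddGroup.eq_zero_iff _).mp this

end PGOFR

/-- Lemma `idem-par-ofr`, second part. -/
theorem statement10 {ℓ : ℕ} (hl : 3 ≤ ℓ) (o : PGOFR ℓ)
    (h29 : o.cond29) (h30 : o.cond30) :
    -- every R_{ij} is abelian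
    (∀ i j, adm2 ℓ i j → ∀ a b : o.R i j, a + b = b + a) ∧
    -- D_i^min is central in Δ⁰_i
    (∀ i, adm ℓ i → ∀ v ∈ o.Dmin i, ∀ u : o.Δ i, u + v = v + u) ∧
    -- D_i^min contains the commutator subgroup of Δ⁰_i
    (∀ i, adm ℓ i → ∀ u v : o.Δ i, u + v - u - v ∈ o.Dmin i) ∧
    -- D_i^min ∘ Δ⁰_j = 0
    (∀ i j, adm2 ℓ i j → ∀ v ∈ o.Dmin i, ∀ u : o.Δ j, o.circ i j v u = 0) ∧
    -- D_i^min · R_{ij} ⊆ D_j^min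
    (∀ i j, adm2 ℓ i j → ∀ v ∈ o.Dmin i, ∀ a : o.R i j, o.dot i j v a ∈ o.Dmin j) ∧
    -- D_i^min = ⟨R_{-i,j} ∗ R_{ji}⟩ for any single fixed j
    (∀ i j, adm2 ℓ i j →
      o.Dmin i = AddSubgroup.closure {x | ∃ a b, x = o.star i j a b}) := by
  refine ⟨fun i j hij => o.R_comm h29 hl hij,
    fun i _ v hv u => AddSubgroup.mem_center_iff.mp (o.dmin_central i hv) u,
    fun i hi => o.comm_dmin h30 hl hi,
    fun i j hij => o.circ_dmin h29 hl hij,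
    fun i j hij => o.dot_dmin h29 hl hij,
    fun i j hij => o.dmin_eq h29 hij⟩
end

section
/- Let A_{ij} be abelian groups for 0 ≤ i < j ≤ 4 with (i, j) ≠ (1, 3), and let μ_{ijk} : A_{ij} × A_{jk} → A_{ik} be biadditive maps for (i, j, k) ∈ {(0,1,2), (0,2,3), (0,3,4), (0,1,4), (1,2,4), (2,3,4)}. Suppose that A_{02} is generated by the elements μ_{012}(a, b) (a ∈ A_{01}, b ∈ A_{12}), that A_{24} is generated by the elements μ_{234}(c, d) (c ∈ A_{23}, d ∈ A_{34}), and that μ_{014}(a, μ_{124}(b, μ_{234}(c, d))) = μ_{034}(μ_{023}(μ_{012}(a, b), c), d) for all a ∈ A_{01}, b ∈ A_{12}, c ∈ A_{23}, d ∈ A_{34}. Then there is a unique biadditive map μ_{024} : A_{02} × A_{24} → A_{04} such that μ_{024}(μ_{012}(a, b), c) = μ_{014}(a, μ_{124}(b, c)) and μ_{034}(μ_{023}(x, c), d) = μ_{024}(x, μ_{234}(c, d)) for all appropriate arguments. -/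
/-!
For `x : A02`, the values `μ034 (μ023 x c) d` prescribed on the generators `μ234 c d` of `A24`
extend to a homomorphism `A24 →+ A04`: since these values are additive in `x`, the `x` for which
such an extension exists form a subgroup of `A02`, and it contains every generator `μ012 a b`,
for which `y ↦ μ014 a (μ124 b y)` is an extension by `hassoc`. Homomorphisms out of `A24` are
determined by their values on its generators, so the extension is unique; this uniqueness also
makes it additive in `x` and equal to `μ014 a (μ124 b ·)` at `x = μ012 a b`.
-/

open Function

namespace AddMonoidHom

variable {A B C : Type*}

theorem exists_comp_eq_of_range_le [AddGroup A] [AddGroup B] [AddGroup C] {g : B →+ C}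
    (hg : Injective g) {f : A →+ C} (h : f.range ≤ g.range) : ∃ φ : A →+ B, g.comp φ = f :=
  ⟨(ofInjective hg).symm.toAddMonoidHom.comp (f.codRestrict g.range fun x => h ⟨x, rfl⟩), by
    ext x
    simp [← ofInjective_apply hg]⟩

theorem range_le_of_closure_eq_top [AddGroup A] [AddGroup B] {s : Set A}
    (hs : AddSubgroup.closure s = ⊤) {f : A →+ B} {S : AddSubgroup B} (h : ∀ x ∈ s, f x ∈ S) :
    f.range ≤ S := by
  rw [range_eq_map, ← hs, map_closure, AddSubgroup.closure_le]
  rintro _ ⟨x, hx, rfl⟩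
  exact h x hx

variable {D M : Type*} [AddCommGroup B] [AddCommGroup M]

def onProducts (β : C → D → B) : (B →+ M) →+ (C → D → M) where
  toFun f c d := f (β c d)
  map_zero' := rfl
  map_add' _ _ := rfl

theorem onProducts_injective {β : C → D → B}
    (hβ : AddSubgroup.closure {x | ∃ c d, x = β c d} = ⊤) :
    Injective (onProducts (M := M) β) := fun f g hfg =>
  eq_of_eqOn_dense hβ <| by
    rintro _ ⟨c, d, rfl⟩
    exact congrFun (congrFun hfg c) d

end AddMonoidHom

open AddMonoidHom

theorem statement11_general {A01 A02 A03 A04 A12 A14 A23 A24 A34 : Type}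
    [AddCommGroup A01] [AddCommGroup A02] [AddCommGroup A03] [AddCommGroup A04]
    [AddCommGroup A12] [AddCommGroup A14] [AddCommGroup A23] [AddCommGroup A24]
    [AddCommGroup A34]
    (μ012 : A01 → A12 → A02) (μ023 : A02 → A23 → A03) (μ034 : A03 → A34 → A04)
    (μ014 : A01 → A14 → A04) (μ124 : A12 → A24 → A14) (μ234 : A23 → A34 → A24)
    (h023l : ∀ a a' b, μ023 (a + a') b = μ023 a b + μ023 a' b)
    (h034l : ∀ a a' b, μ034 (a + a') b = μ034 a b + μ034 a' b)
    (h014r : ∀ a b b', μ014 a (b + b') = μ014 a b + μ014 a b')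
    (h124r : ∀ a b b', μ124 a (b + b') = μ124 a b + μ124 a b')
    (hgen02 : AddSubgroup.closure {x : A02 | ∃ a b, x = μ012 a b} = ⊤)
    (hgen24 : AddSubgroup.closure {x : A24 | ∃ c d, x = μ234 c d} = ⊤)
    (hassoc : ∀ a b c d,
      μ014 a (μ124 b (μ234 c d)) = μ034 (μ023 (μ012 a b) c) d) :
    ∃! μ024 : A02 → A24 → A04,
      (∀ x x' y, μ024 (x + x') y = μ024 x y + μ024 x' y) ∧
      (∀ x y y', μ024 x (y + y') = μ024 x y + μ024 x y') ∧
      (∀ a b c, μ024 (μ012 a b) c = μ014 a (μ124 b c)) ∧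
      (∀ x c d, μ034 (μ023 x c) d = μ024 x (μ234 c d)) := by
  let L : A02 →+ (A23 → A34 → A04) :=
    mk' (fun x c d => μ034 (μ023 x c) d) fun x x' => by
      funext c d
      simp only [Pi.add_apply, h023l, h034l]
  let ψ (a : A01) (b : A12) : A24 →+ A04 :=
    mk' (fun y => μ014 a (μ124 b y)) fun y y' => by simp only [h124r, h014r]
  have hinj := onProducts_injective (M := A04) hgen24
  have hψ (a : A01) (b : A12) : onProducts μ234 (ψ a b) = L (μ012 a b) := by
    funext c d
    exact hassoc a b c d
  have hrange : L.range ≤ (onProducts μ234).range :=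
    range_le_of_closure_eq_top hgen02 <| by
      rintro _ ⟨a, b, rfl⟩
      exact ⟨ψ a b, hψ a b⟩
  obtain ⟨Φ, hΦ⟩ := exists_comp_eq_of_range_le hinj hrange
  have hΦL (x : A02) : onProducts μ234 (Φ x) = L x := DFunLike.congr_fun hΦ x
  refine ⟨fun x => Φ x, ⟨fun x x' => DFunLike.congr_fun (map_add Φ x x'), fun x => map_add (Φ x),
    fun a b => DFunLike.congr_fun (hinj ((hΦL _).trans (hψ a b).symm)),
    fun x c d => (congrFun (congrFun (hΦL x) c) d).symm⟩, ?_⟩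
  · rintro ν ⟨-, hν, -, hνL⟩
    funext x
    have : onProducts μ234 (mk' (ν x) (hν x)) = L x := by
      funext c d
      exact (hνL x c d).symm
    exact DFunLike.ext'_iff.mp (hinj (this.trans (hΦL x).symm))

/-- Lemma `mul-cons`. -/
theorem statement11 {A01 A02 A03 A04 A12 A14 A23 A24 A34 : Type}
    [AddCommGroup A01] [AddCommGroup A02] [AddCommGroup A03] [AddCommGroup A04]
    [AddCommGroup A12] [AddCommGroup A14] [AddCommGroup A23] [AddCommGroup A24]
    [AddCommGroup A34]
    (μ012 : A01 → A12 → A02) (μ023 : A02 → A23 → A03) (μ034 : A03 → A34 → A04)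
    (μ014 : A01 → A14 → A04) (μ124 : A12 → A24 → A14) (μ234 : A23 → A34 → A24)
    (h012l : ∀ a a' b, μ012 (a + a') b = μ012 a b + μ012 a' b)
    (h012r : ∀ a b b', μ012 a (b + b') = μ012 a b + μ012 a b')
    (h023l : ∀ a a' b, μ023 (a + a') b = μ023 a b + μ023 a' b)
    (h023r : ∀ a b b', μ023 a (b + b') = μ023 a b + μ023 a b')
    (h034l : ∀ a a' b, μ034 (a + a') b = μ034 a b + μ034 a' b)
    (h034r : ∀ a b b', μ034 a (b + b') = μ034 a b + μ034 a b')
    (h014l : ∀ a a' b, μ014 (a + a') b = μ014 a b + μ014 a' b)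
    (h014r : ∀ a b b', μ014 a (b + b') = μ014 a b + μ014 a b')
    (h124l : ∀ a a' b, μ124 (a + a') b = μ124 a b + μ124 a' b)
    (h124r : ∀ a b b', μ124 a (b + b') = μ124 a b + μ124 a b')
    (h234l : ∀ a a' b, μ234 (a + a') b = μ234 a b + μ234 a' b)
    (h234r : ∀ a b b', μ234 a (b + b') = μ234 a b + μ234 a b')
    (hgen02 : AddSubgroup.closure {x : A02 | ∃ a b, x = μ012 a b} = ⊤)
    (hgen24 : AddSubgroup.closure {x : A24 | ∃ c d, x = μ234 c d} = ⊤)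
    (hassoc : ∀ a b c d,
      μ014 a (μ124 b (μ234 c d)) = μ034 (μ023 (μ012 a b) c) d) :
    ∃! μ024 : A02 → A24 → A04,
      (∀ x x' y, μ024 (x + x') y = μ024 x y + μ024 x' y) ∧
      (∀ x y y', μ024 x (y + y') = μ024 x y + μ024 x y') ∧
      (∀ a b c, μ024 (μ012 a b) c = μ014 a (μ124 b c)) ∧
      (∀ x c d, μ034 (μ023 x c) d = μ024 x (μ234 c d)) :=
  statement11_general μ012 μ023 μ034 μ014 μ124 μ234 h023l h034l h014r h124r hgen02 hgen24 hassoc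
end

section
/- Let (R_{ij}, Δ⁰_i) be a partial graded odd form K-algebra of rank ℓ ≥ 3 satisfying (R29), (R30) and the associativity conditions (A1)–(A4). Then for all u ∈ Δ⁰_i, a ∈ R_{ij}, b ∈ R_{jk}, where the indices i, j, k are nonzero with pairwise distinct absolute values, one has (u·a) ◁ b = ā((u◁a)b). -/
/-- The structure of a partial graded odd form `K`-algebra on a partial graded
odd form ring: `K`-module structures on the `R i j`, 2-step nilpotent
`K`-module structures on the `Δ i` with nilpotent filtrations `D i`, and the
identities (R31)–(R41). -/
structure PGOFAlgStr (K : Type) [CommRing K] {ℓ : ℕ} (o : PGOFR ℓ) where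
  -- the R i j are K-modules
  commR : ∀ i j, adm2 ℓ i j → ∀ a b : o.R i j, a + b = b + a
  smulR : ∀ i j, K → o.R i j → o.R i j
  smulR_add : ∀ i j, adm2 ℓ i j → ∀ (k : K) (a b : o.R i j),
    smulR i j k (a + b) = smulR i j k a + smulR i j k b
  add_smulR : ∀ i j, adm2 ℓ i j → ∀ (k k' : K) (a : o.R i j),
    smulR i j (k + k') a = smulR i j k a + smulR i j k' a
  mul_smulR : ∀ i j, adm2 ℓ i j → ∀ (k k' : K) (a : o.R i j),
    smulR i j (k * k') a = smulR i j k (smulR i j k' a)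
  one_smulR : ∀ i j, adm2 ℓ i j → ∀ a : o.R i j, smulR i j 1 a = a
  -- the Δ i are 2-step nilpotent K-modules with nilpotent filtration D i
  actK : ∀ i, o.Δ i → K → o.Δ i
  actK_add : ∀ i, adm ℓ i → ∀ (u v : o.Δ i) (k : K),
    actK i (u + v) k = actK i u k + actK i v k
  actK_one : ∀ i, adm ℓ i → ∀ u : o.Δ i, actK i u 1 = u
  actK_mul : ∀ i, adm ℓ i → ∀ (u : o.Δ i) (k k' : K),
    actK i (actK i u k) k' = actK i u (k * k')
  D : ∀ i, AddSubgroup (o.Δ i)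
  D_central : ∀ i, adm ℓ i → ∀ v ∈ D i, ∀ u : o.Δ i, u + v = v + u
  D_comm : ∀ i, adm ℓ i → ∀ u v : o.Δ i, u + v - u - v ∈ D i
  smulD : ∀ i, K → o.Δ i → o.Δ i
  smulD_mem : ∀ i, adm ℓ i → ∀ (k : K), ∀ v ∈ D i, smulD i k v ∈ D i
  smulD_add : ∀ i, adm ℓ i → ∀ (k : K), ∀ v ∈ D i, ∀ w ∈ D i,
    smulD i k (v + w) = smulD i k v + smulD i k w
  add_smulD : ∀ i, adm ℓ i → ∀ (k k' : K), ∀ v ∈ D i,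
    smulD i (k + k') v = smulD i k v + smulD i k' v
  mul_smulD : ∀ i, adm ℓ i → ∀ (k k' : K), ∀ v ∈ D i,
    smulD i (k * k') v = smulD i k (smulD i k' v)
  one_smulD : ∀ i, adm ℓ i → ∀ v ∈ D i, smulD i 1 v = v
  actK_comm : ∀ i, adm ℓ i → ∀ (u v : o.Δ i) (k k' : K),
    actK i u k + actK i v k' - actK i u k - actK i v k' =
      smulD i (k * k') (u + v - u - v)
  τ : ∀ i, o.Δ i → o.Δ i
  τ_mem : ∀ i, adm ℓ i → ∀ u : o.Δ i, τ i u ∈ D i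
  actK_add_scalar : ∀ i, adm ℓ i → ∀ (u : o.Δ i) (k k' : K),
    actK i u (k + k') = actK i u k + smulD i (k * k') (τ i u) + actK i u k'
  actK_D : ∀ i, adm ℓ i → ∀ v ∈ D i, ∀ k : K, actK i v k = smulD i (k * k) v
  -- (R31)
  r31 : ∀ i j, adm2 ℓ i j → ∀ v ∈ D i, ∀ u : o.Δ j, o.circ i j v u = 0
  -- (R32)
  r32 : ∀ i j, adm2 ℓ i j → ∀ (a : o.R (-i) j) (b : o.R j i), o.star i j a b ∈ D i
  -- (R33)
  r33 : ∀ i j, adm2 ℓ i j → ∀ v ∈ D i, ∀ a : o.R i j, o.dot i j v a ∈ D j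
  -- (R34)
  r34 : ∀ i j, adm2 ℓ i j → ∀ (k : K) (a : o.R i j),
    o.inv i j (smulR i j k a) = smulR (-j) (-i) k (o.inv i j a)
  -- (R35)
  r35l : ∀ i j k, adm3 ℓ i j k → ∀ (c : K) (a : o.R i j) (b : o.R j k),
    o.mul i j k (smulR i j c a) b = smulR i k c (o.mul i j k a b)
  r35r : ∀ i j k, adm3 ℓ i j k → ∀ (c : K) (a : o.R i j) (b : o.R j k),
    o.mul i j k a (smulR j k c b) = smulR i k c (o.mul i j k a b)
  -- (R36)
  r36l : ∀ i j, adm2 ℓ i j → ∀ (c : K) (a : o.R (-i) j) (b : o.R j i),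
    o.star i j (smulR (-i) j c a) b = smulD i c (o.star i j a b)
  r36r : ∀ i j, adm2 ℓ i j → ∀ (c : K) (a : o.R (-i) j) (b : o.R j i),
    o.star i j a (smulR j i c b) = smulD i c (o.star i j a b)
  -- (R37)
  r37l : ∀ i j, adm2 ℓ i j → ∀ (c : K) (u : o.Δ i) (v : o.Δ j),
    o.circ i j (actK i u c) v = smulR (-i) j c (o.circ i j u v)
  r37r : ∀ i j, adm2 ℓ i j → ∀ (c : K) (u : o.Δ i) (v : o.Δ j),
    o.circ i j u (actK j v c) = smulR (-i) j c (o.circ i j u v)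
  -- (R38)
  r38l : ∀ i j, adm2 ℓ i j → ∀ (c : K) (u : o.Δ i) (a : o.R i j),
    o.tri i j (actK i u c) a = smulR (-i) j (c * c) (o.tri i j u a)
  r38r : ∀ i j, adm2 ℓ i j → ∀ (c : K) (u : o.Δ i) (a : o.R i j),
    o.tri i j u (smulR i j c a) = smulR (-i) j c (o.tri i j u a)
  -- (R39)
  r39 : ∀ i j, adm2 ℓ i j → ∀ (c : K), ∀ v ∈ D i, ∀ a : o.R i j,
    o.tri i j (smulD i c v) a = smulR (-i) j c (o.tri i j v a)
  -- (R40)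
  r40l : ∀ i j, adm2 ℓ i j → ∀ (c : K) (u : o.Δ i) (a : o.R i j),
    o.dot i j (actK i u c) a = o.dot i j u (smulR i j c a)
  r40r : ∀ i j, adm2 ℓ i j → ∀ (c : K) (u : o.Δ i) (a : o.R i j),
    actK j (o.dot i j u a) c = o.dot i j u (smulR i j c a)
  -- (R41)
  r41 : ∀ i j, adm2 ℓ i j → ∀ (c : K), ∀ v ∈ D i, ∀ a : o.R i j,
    o.dot i j (smulD i c v) a = smulD j c (o.dot i j v a)
private lemma aux_group12 {G : Type*} [AddGroup G] {A B C : G}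
    (h : -A + C + -B = 0) : C = A + B := by
  have h1 : -A + C = B := by
    have h2 := congrArg (· + B) h
    simpa [add_assoc] using h2
  have h3 := congrArg (A + ·) h1
  simpa [← add_assoc] using h3

/-- Lemma `tri-dot-2`. -/
theorem statement12 {K : Type} [CommRing K] {ℓ : ℕ} (hl : 3 ≤ ℓ)
    (o : PGOFR ℓ) (s : PGOFAlgStr K o)
    (h29 : o.cond29) (h30 : o.cond30)
    (hA1 : o.condA1) (hA2 : o.condA2) (hA3 : o.condA3) (hA4 : o.condA4) :
    ∀ i j k, adm3 ℓ i j k → ∀ (u : o.Δ i) (a : o.R i j) (b : o.R j k),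
      o.tri j k (o.dot i j u a) b =
        o.mul (-j) (-i) k (o.inv i j a) (o.mul (-i) j k (o.tri i j u a) b) := by
  intro i j k h u a b
  obtain ⟨hi, hj, hk, hij, hik, hjk⟩ := h
  have h3 : adm3 ℓ i j k := ⟨hi, hj, hk, hij, hik, hjk⟩
  have hjk2 : adm2 ℓ j k := ⟨hj, hk, hjk⟩
  have hik2 : adm2 ℓ i k := ⟨hi, hk, hik⟩
  have hnj : adm ℓ (-j) := ⟨neg_ne_zero.mpr hj.1, by rw [abs_neg]; exact hj.2⟩
  have hni : adm ℓ (-i) := ⟨neg_ne_zero.mpr hi.1, by rw [abs_neg]; exact hi.2⟩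
  have h3a : adm3 ℓ (-j) (-i) k := by
    refine ⟨hnj, hni, hk, ?_, ?_, ?_⟩ <;> simp [abs_neg] <;>
      first | exact fun e => hij e.symm | exact hjk | exact hik
  have h3b : adm3 ℓ (-j) i k := by
    refine ⟨hnj, hi, hk, ?_, ?_, ?_⟩ <;> simp [abs_neg] <;>
      first | exact fun e => hij e.symm | exact hjk | exact hik
  -- mul: negation in second argument
  have mulneg : ∀ i' j' k' (h' : adm3 ℓ i' j' k') (x : o.R i' j') (y : o.R j' k'),
      o.mul i' j' k' x (-y) = -o.mul i' j' k' x y := by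
    intro i' j' k' h' x y
    have hz : o.mul i' j' k' x (0 : o.R j' k') = 0 := by
      have h0 := o.r3 i' j' k' h' x 0 0
      rw [add_zero] at h0
      exact (left_eq_add.mp h0)
    have h0 := o.r3 i' j' k' h' x y (-y)
    rw [add_neg_cancel, hz] at h0
    exact eq_neg_of_add_eq_zero_right h0.symm
  -- dot: negation in first argument
  have dotneg : ∀ i' j' (h' : adm2 ℓ i' j') (v : o.Δ i') (x : o.R i' j'),
      o.dot i' j' (-v) x = -o.dot i' j' v x := by
    intro i' j' h' v x
    have h0 := o.r15 i' j' h' v (-v) x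
    have hz : o.dot i' j' (0 : o.Δ i') x = 0 := by
      have h1 := o.r15 i' j' h' 0 0 x
      rw [add_zero] at h1
      exact (left_eq_add.mp h1)
    rw [add_neg_cancel, hz] at h0
    exact eq_neg_of_add_eq_zero_right h0.symm
  -- tri: negation in second argument
  have trineg : ∀ i' j' (h' : adm2 ℓ i' j') (v : o.Δ i') (x : o.R i' j'),
      o.tri i' j' v (-x) = -o.tri i' j' v x := by
    intro i' j' h' v x
    have hz : o.tri i' j' v (0 : o.R i' j') = 0 := by
      have h1 := o.r17 i' j' h' v 0 0
      rw [add_zero] at h1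
      exact (left_eq_add.mp h1)
    have h0 := o.r17 i' j' h' v x (-x)
    rw [add_neg_cancel, hz] at h0
    exact eq_neg_of_add_eq_zero_right h0.symm
  -- circ: zero in first argument, negation in second argument
  have circz : ∀ (w : o.Δ k), o.circ j k (0 : o.Δ j) w = 0 := by
    intro w
    have h1 := o.r10 j k hjk2 0 0 w
    rw [add_zero] at h1
    exact (left_eq_add.mp h1)
  have circneg : ∀ (v : o.Δ j) (w : o.Δ k), o.circ j k v (-w) = -o.circ j k v w := by
    intro v w
    have hz : o.circ j k v (0 : o.Δ k) = 0 := by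
      have h1 := o.r11 j k hjk2 v 0 0
      rw [add_zero] at h1
      exact (left_eq_add.mp h1)
    have h0 := o.r11 j k hjk2 v w (-w)
    rw [add_neg_cancel, hz] at h0
    exact eq_neg_of_add_eq_zero_right h0.symm
  -- tri 0 b = 0
  have triz : o.tri j k (0 : o.Δ j) b = 0 := by
    have h0 := o.r16 j k hjk2 0 0 b
    rw [add_zero, circz, add_zero] at h0
    exact (left_eq_add.mp h0)
  set v₀ := o.dot i j u a with hv₀
  set c := o.mul i j k a b with hc
  set A := o.mul (-j) (-i) k (o.inv i j a) (o.tri i k u c) with hA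
  set B := o.mul (-j) i k
    (rc2 (F := o.R) rfl (neg_neg i) (o.inv (-i) j (o.tri i j u a))) c with hB
  -- r23 with b' = -c
  have e23 := o.r23 i j k h3 u a (-c)
  rw [trineg i k hik2 u c, mulneg (-j) (-i) k h3a, mulneg (-j) i k h3b] at e23
  have eC : o.circ j k v₀ (o.dot i k u (-c)) = A + B := aux_group12 e23
  -- rewrite dot j k (-v₀) (-b)
  have ed : o.dot j k (-v₀) (-b) = -o.dot i k u (-c) := by
    rw [dotneg j k hjk2 v₀ (-b), o.r28 i j k h3 u a (-b),
      mulneg i j k h3 a b, ← hc]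
  -- r16 with u := v₀, v := -v₀
  have e16 := o.r16 j k hjk2 v₀ (-v₀) b
  rw [add_neg_cancel, triz, ed, circneg, eC] at e16
  -- r27
  have e27 : o.tri j k (-v₀) b = B := o.r27 i j k h3 u a b
  rw [e27] at e16
  -- now 0 = B + -(A + B) + tri v₀ b
  have : o.tri j k v₀ b = A := by
    have h0 := e16.symm
    rw [neg_add_rev] at h0
    -- h0 : B + (-B + -A) + tri v₀ b = 0
    rw [add_neg_cancel_left] at h0
    exact (neg_add_eq_zero.mp h0).symm
  rw [this, hA, o.r26 i j k h3 u a b]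
end
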